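/- Let u ⊆ {1,…,s} be nonempty and k ∈ {0,1,…,m−1}^{|u|}. Then Γ_{u,k} ≤ 2^{m − rank(C_{u,k})}, where rank(C_{u,k}) is the rank of C_{u,k} over F₂. -/
import Mathlib


open Finset

noncomputable section

/-- The bit vector `i⃗ ∈ F₂^m` of the integer `i = Σ_{ℓ=1}^m i_ℓ 2^{ℓ-1}`. -/
def bvec (m : ℕ) (i : ℕ) : Fin m → ZMod 2 :=
  fun ℓ => if Nat.testBit i ℓ.1 then 1 else 0

/-- The `(r+1)`-st row (i.e. `r` with 0-indexing) of an `m × m` matrix over `F₂`,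
as a vector in `F₂^m`; junk value `0` if `r ≥ m` (never used under the hypotheses below). -/
def rowAt (m : ℕ) (A : Matrix (Fin m) (Fin m) (ZMod 2)) (r : ℕ) : Fin m → ZMod 2 :=
  fun ℓ => if h : r < m then A ⟨r, h⟩ ℓ else 0

/-- The stacked matrix `C_{u,k}`: for each `j ∈ u`, the first `k j` rows of `C j`. -/
def stack {m s : ℕ} (C : Fin s → Matrix (Fin m) (Fin m) (ZMod 2))
    (u : Finset (Fin s)) (k : Fin s → ℕ) :
    Matrix ((j : {x // x ∈ u}) × Fin (k j.1)) (Fin m) (ZMod 2) :=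
  fun p => rowAt m (C p.1.1) p.2.1

/-- `∇C_{u,k}`: the matrix whose rows are the `(k j + 1)`-st rows (1-indexed) of `C j`, `j ∈ u`. -/
def grad {m s : ℕ} (C : Fin s → Matrix (Fin m) (Fin m) (ZMod 2))
    (u : Finset (Fin s)) (k : Fin s → ℕ) :
    Matrix {x // x ∈ u} (Fin m) (ZMod 2) :=
  fun j => rowAt m (C j.1) (k j.1)

/-- The coordinate `x_{ij} ∈ [0,1)` of the digital net generated by `C₁,…,C_s`:
`x_{ij} = Σ_{ℓ=1}^m y_ℓ 2^{-ℓ}` where `y = C_j · i⃗` over `F₂`. -/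
def pt {m s : ℕ} (C : Fin s → Matrix (Fin m) (Fin m) (ZMod 2)) (i : ℕ) (j : Fin s) : ℝ :=
  ∑ ℓ : Fin m, (((C j).mulVec (bvec m i) ℓ).val : ℝ) / 2 ^ (ℓ.1 + 1)

/-- The factor `N`: with `M(x,x') = max{k ∈ ℕ₀ : ⌊2^k x⌋ = ⌊2^k x'⌋}` (the number of matching
leading binary digits), `Nf x x' c` equals `1` if `M(x,x') > c` (equivalently the first `c+1`
binary digits match), `-1` if `M(x,x') = c` (the first `c` digits match but not `c+1`), and
`0` if `M(x,x') < c`. -/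
def Nf (x x' : ℝ) (c : ℕ) : ℤ :=
  if ⌊(2:ℝ) ^ (c + 1) * x⌋ = ⌊(2:ℝ) ^ (c + 1) * x'⌋ then 1
  else if ⌊(2:ℝ) ^ c * x⌋ = ⌊(2:ℝ) ^ c * x'⌋ then -1
  else 0

/-- The gain coefficient `Γ_{u,k} = 2^{-m} Σ_{i=0}^{2^m-1} Σ_{i'=0}^{2^m-1} ∏_{j∈u} N_{i,i',j}`. -/
def Gam {m s : ℕ} (C : Fin s → Matrix (Fin m) (Fin m) (ZMod 2))
    (u : Finset (Fin s)) (k : Fin s → ℕ) : ℚ :=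
  (2 ^ m : ℚ)⁻¹ * ∑ i ∈ Finset.range (2 ^ m), ∑ i' ∈ Finset.range (2 ^ m),
      ∏ j ∈ u, (Nf (pt C i j) (pt C i' j) (k j) : ℚ)

/-- MSB-first value of the first `t` bits. -/
def fb (y : ℕ → ℕ) : ℕ → ℕ
  | 0 => 0
  | t+1 => 2 * fb y t + y t

lemma fb_inj {y y' : ℕ → ℕ} (hy : ∀ ℓ, y ℓ ≤ 1) (hy' : ∀ ℓ, y' ℓ ≤ 1) :
    ∀ t, (fb y t = fb y' t ↔ ∀ ℓ < t, y ℓ = y' ℓ)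
  | 0 => by simp [fb]
  | t+1 => by
    constructor
    · intro h ℓ hℓ
      have h2 : 2 * fb y t + y t = 2 * fb y' t + y' t := h
      have hyt := hy t; have hy't := hy' t
      have hft : fb y t = fb y' t := by omega
      have hvt : y t = y' t := by omega
      rcases Nat.lt_succ_iff_lt_or_eq.mp hℓ with h' | h'
      · exact ((fb_inj hy hy' t).mp hft) ℓ h'
      · subst h'; exact hvt
    · intro h
      have hft : fb y t = fb y' t := (fb_inj hy hy' t).mpr fun ℓ hℓ => h ℓ (by omega)
      show 2 * fb y t + y t = 2 * fb y' t + y' t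
      rw [hft, h t (by omega)]

lemma sum_halves (n : ℕ) : ∑ p ∈ Finset.range n, (1:ℝ)/2^(p+1) = 1 - 1/2^n := by
  induction n with
  | zero => simp
  | succ n ih =>
    rw [Finset.sum_range_succ, ih, pow_succ]
    have h : (2:ℝ)^n ≠ 0 := by positivity
    field_simp
    ring

lemma fb_sum (y : ℕ → ℕ) (t : ℕ) :
    ∑ ℓ ∈ Finset.range t, (y ℓ : ℝ) * (2^t / 2^(ℓ+1)) = fb y t := by
  induction t with
  | zero => simp [fb]
  | succ t ih =>
    rw [Finset.sum_range_succ]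
    have hcongr : ∀ ℓ ∈ Finset.range t,
        (y ℓ : ℝ) * (2^(t+1)/2^(ℓ+1)) = 2 * ((y ℓ:ℝ) * (2^t/2^(ℓ+1))) := by
      intro ℓ _; rw [pow_succ]; ring
    rw [Finset.sum_congr rfl hcongr, ← Finset.mul_sum, ih]
    show 2 * (fb y t : ℝ) + (y t : ℝ) * (2^(t+1)/2^(t+1)) = (2 * fb y t + y t : ℕ)
    have h : (2:ℝ)^(t+1) ≠ 0 := by positivity
    push_cast
    field_simp

lemma floor_bits (y : ℕ → ℕ) (hy : ∀ ℓ, y ℓ ≤ 1) (m t : ℕ) (ht : t ≤ m) :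
    ⌊(2:ℝ)^t * ∑ ℓ ∈ Finset.range m, (y ℓ : ℝ)/2^(ℓ+1)⌋ = fb y t := by
  have hsplit : (2:ℝ)^t * ∑ ℓ ∈ Finset.range m, (y ℓ : ℝ)/2^(ℓ+1)
      = (fb y t : ℝ) + ∑ ℓ ∈ Finset.Ico t m, (y ℓ : ℝ) * (2^t/2^(ℓ+1)) := by
    rw [Finset.mul_sum, Finset.range_eq_Ico,
      ← Finset.sum_Ico_consecutive _ (Nat.zero_le t) ht, ← Finset.range_eq_Ico, ← fb_sum y t]
    congr 1
    · exact Finset.sum_congr rfl fun ℓ _ => by ring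
    · exact Finset.sum_congr rfl fun ℓ _ => by ring
  have hR0 : 0 ≤ ∑ ℓ ∈ Finset.Ico t m, (y ℓ : ℝ) * (2^t/2^(ℓ+1)) :=
    Finset.sum_nonneg fun ℓ _ => by positivity
  have hR1 : ∑ ℓ ∈ Finset.Ico t m, (y ℓ : ℝ) * (2^t/2^(ℓ+1)) < 1 := by
    have hle : ∑ ℓ ∈ Finset.Ico t m, (y ℓ : ℝ) * (2^t/2^(ℓ+1))
        ≤ ∑ ℓ ∈ Finset.Ico t m, 1 * ((2:ℝ)^t/2^(ℓ+1)) := by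
      apply Finset.sum_le_sum
      intro ℓ _
      have h1 : (y ℓ : ℝ) ≤ 1 := by exact_mod_cast hy ℓ
      have hp : (0:ℝ) ≤ 2^t/2^(ℓ+1) := by positivity
      exact mul_le_mul_of_nonneg_right h1 hp
    have heq : ∑ ℓ ∈ Finset.Ico t m, 1 * ((2:ℝ)^t/2^(ℓ+1))
        = ∑ p ∈ Finset.range (m - t), (1:ℝ)/2^(p+1) := by
      rw [Finset.sum_Ico_eq_sum_range]
      apply Finset.sum_congr rfl
      intro p _
      rw [one_mul]
      have h2 : (2:ℝ)^(t+p+1) = 2^t * 2^(p+1) := by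
        rw [show t+p+1 = t+(p+1) from by ring, pow_add]
      rw [h2, div_mul_eq_div_div]
      have h3 : (2:ℝ)^t ≠ 0 := by positivity
      rw [div_self h3]
    have hlt : ∑ p ∈ Finset.range (m - t), (1:ℝ)/2^(p+1) < 1 := by
      rw [sum_halves]
      have : (0:ℝ) < 1/2^(m-t) := by positivity
      linarith
    calc _ ≤ _ := hle
      _ = _ := heq
      _ < 1 := hlt
  rw [hsplit, Int.floor_eq_iff]
  constructor
  · push_cast; linarith
  · push_cast; linarith

lemma zmod2_add_eq_zero : ∀ a b : ZMod 2, a + b = 0 ↔ a = b := by decide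

lemma bvec_inj {m : ℕ} {i i' : ℕ} (hi : i < 2^m) (hi' : i' < 2^m)
    (h : bvec m i = bvec m i') : i = i' := by
  apply Nat.eq_of_testBit_eq
  intro ℓ
  by_cases hℓ : ℓ < m
  · have hc := congrFun h ⟨ℓ, hℓ⟩
    simp only [bvec] at hc
    by_cases h1 : i.testBit ℓ <;> by_cases h2 : i'.testBit ℓ <;>
      simp [h1, h2] at hc ⊢
  · have h1 : i < 2^ℓ := lt_of_lt_of_le hi (Nat.pow_le_pow_right (by norm_num) (le_of_not_gt hℓ))
    have h2 : i' < 2^ℓ := lt_of_lt_of_le hi' (Nat.pow_le_pow_right (by norm_num) (le_of_not_gt hℓ))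
    rw [Nat.testBit_lt_two_pow h1, Nat.testBit_lt_two_pow h2]

lemma bvec_image_eq {m : ℕ} :
    (Finset.range (2^m)).image (bvec m) = (Finset.univ : Finset (Fin m → ZMod 2)) := by
  classical
  apply Finset.eq_univ_of_card
  rw [Finset.card_image_of_injOn fun i hi i' hi' h =>
    bvec_inj (Finset.mem_range.mp hi) (Finset.mem_range.mp hi') h, Finset.card_range,
    Fintype.card_fun, ZMod.card, Fintype.card_fin]


/-- digit sequence of `x_{ij}` as a `ℕ`-valued function. -/
def yv {m s : ℕ} (C : Fin s → Matrix (Fin m) (Fin m) (ZMod 2)) (i : ℕ) (j : Fin s) (ℓ : ℕ) : ℕ :=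
  if h : ℓ < m then ((C j).mulVec (bvec m i) ⟨ℓ, h⟩).val else 0

lemma yv_le {m s : ℕ} (C : Fin s → Matrix (Fin m) (Fin m) (ZMod 2)) (i : ℕ) (j : Fin s)
    (ℓ : ℕ) : yv C i j ℓ ≤ 1 := by
  unfold yv
  split
  · exact Nat.lt_succ_iff.mp (ZMod.val_lt _)
  · exact Nat.zero_le 1

lemma pt_eq_sum_range {m s : ℕ} (C : Fin s → Matrix (Fin m) (Fin m) (ZMod 2)) (i : ℕ)
    (j : Fin s) : pt C i j = ∑ ℓ ∈ Finset.range m, ((yv C i j ℓ : ℝ))/2^(ℓ+1) := by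
  rw [pt, ← Fin.sum_univ_eq_sum_range (fun n => ((yv C i j n : ℝ))/2^(n+1)) m]
  apply Finset.sum_congr rfl
  intro ℓ _
  simp [yv, ℓ.2]

lemma floor_pt_eq_iff {m s : ℕ} (C : Fin s → Matrix (Fin m) (Fin m) (ZMod 2)) (i i' : ℕ)
    (j : Fin s) (t : ℕ) (ht : t ≤ m) :
    (⌊(2:ℝ)^t * pt C i j⌋ = ⌊(2:ℝ)^t * pt C i' j⌋) ↔
      ∀ ℓ : Fin m, ℓ.1 < t → (C j).mulVec (bvec m i) ℓ = (C j).mulVec (bvec m i') ℓ := by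
  rw [pt_eq_sum_range, pt_eq_sum_range, floor_bits _ (yv_le C i j) m t ht,
    floor_bits _ (yv_le C i' j) m t ht, Nat.cast_inj,
    fb_inj (yv_le C i j) (yv_le C i' j) t]
  constructor
  · intro h ℓ hℓ
    have := h ℓ.1 hℓ
    simp only [yv, ℓ.2, dif_pos, Fin.eta] at this
    exact ZMod.val_injective 2 this
  · intro h ℓ hℓ
    by_cases hm : ℓ < m
    · simp only [yv, dif_pos hm]
      exact congrArg ZMod.val (h ⟨ℓ, hm⟩ hℓ)
    · simp [yv, hm]

lemma stack_mulVec_eq_zero_iff {m s : ℕ} (C : Fin s → Matrix (Fin m) (Fin m) (ZMod 2))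
    (u : Finset (Fin s)) (k : Fin s → ℕ) (hk : ∀ j ∈ u, k j ≤ m - 1) (hm : 1 ≤ m)
    (w : Fin m → ZMod 2) :
    (stack C u k).mulVec w = 0 ↔
      ∀ j ∈ u, ∀ ℓ : Fin m, ℓ.1 < k j → (C j).mulVec w ℓ = 0 := by
  have hval : ∀ (j : {x // x ∈ u}) (r : Fin (k j.1)) (hrm : r.1 < m),
      (stack C u k).mulVec w ⟨j, r⟩ = (C j.1).mulVec w ⟨r.1, hrm⟩ := by
    intro j r hrm
    simp [Matrix.mulVec, dotProduct, stack, rowAt, hrm]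
  constructor
  · intro h j hj ℓ hℓ
    have hc := congrFun h ⟨⟨j, hj⟩, ⟨ℓ.1, hℓ⟩⟩
    rw [hval ⟨j, hj⟩ ⟨ℓ.1, hℓ⟩ ℓ.2] at hc
    simpa using hc
  · intro h
    funext p
    obtain ⟨⟨j, hj⟩, r⟩ := p
    have hr2 : r.1 < k j := r.2
    have hrm : r.1 < m := by have := hk j hj; omega
    rw [hval ⟨j, hj⟩ r hrm]
    simpa using h j hj ⟨r.1, hrm⟩ r.2

lemma abs_Nf_le (x x' : ℝ) (c : ℕ) : |(Nf x x' c : ℚ)| ≤ 1 := by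
  unfold Nf
  split_ifs <;> simp



lemma sum_range_pow_eq_sum_univ {m : ℕ} (g : (Fin m → ZMod 2) → ℚ) :
    ∑ i' ∈ Finset.range (2^m), g (bvec m i') = ∑ v : Fin m → ZMod 2, g v := by
  classical
  rw [← bvec_image_eq, Finset.sum_image]
  intro a ha b hb h
  exact bvec_inj (Finset.mem_range.mp ha) (Finset.mem_range.mp hb) h

set_option maxHeartbeats 1000000 in
theorem statement (m s : ℕ) (hm : 1 ≤ m) (hs : 1 ≤ s)
    (C : Fin s → Matrix (Fin m) (Fin m) (ZMod 2))
    (u : Finset (Fin s)) (hu : u.Nonempty)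
    (k : Fin s → ℕ) (hk : ∀ j ∈ u, k j ≤ m - 1) :
    Gam C u k ≤ (2 : ℚ) ^ (m - (stack C u k).rank) := by
  classical
  set S := stack C u k with hS
  set Kc : ℕ := Nat.card (LinearMap.ker S.mulVecLin) with hKc
  -- kernel cardinality
  have hker_card : Kc = 2 ^ (m - S.rank) := by
    have h1 : Module.finrank (ZMod 2) (LinearMap.range S.mulVecLin)
        + Module.finrank (ZMod 2) (LinearMap.ker S.mulVecLin) = m := by
      rw [LinearMap.finrank_range_add_finrank_ker, Module.finrank_fintype_fun_eq_card,
        Fintype.card_fin]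
    have hr : S.rank = Module.finrank (ZMod 2) (LinearMap.range S.mulVecLin) := rfl
    have h2 : Module.finrank (ZMod 2) (LinearMap.ker S.mulVecLin) = m - S.rank := by omega
    haveI : Fintype (LinearMap.ker S.mulVecLin) := Fintype.ofFinite _
    rw [hKc, Nat.card_eq_fintype_card, Module.card_eq_pow_finrank (K := ZMod 2), ZMod.card, h2]
  -- pointwise bound
  have key : ∀ i ∈ Finset.range (2^m), ∀ i' ∈ Finset.range (2^m),
      (∏ j ∈ u, (Nf (pt C i j) (pt C i' j) (k j) : ℚ)) ≤
        (if S.mulVec (bvec m i + bvec m i') = 0 then (1:ℚ) else 0) := by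
    intro i _ i' _
    by_cases hker : S.mulVec (bvec m i + bvec m i') = 0
    · rw [if_pos hker]
      calc ∏ j ∈ u, (Nf (pt C i j) (pt C i' j) (k j) : ℚ)
          ≤ |∏ j ∈ u, (Nf (pt C i j) (pt C i' j) (k j) : ℚ)| := le_abs_self _
        _ = ∏ j ∈ u, |(Nf (pt C i j) (pt C i' j) (k j) : ℚ)| := Finset.abs_prod _ _
        _ ≤ 1 := Finset.prod_le_one (fun j _ => abs_nonneg _) (fun j _ => abs_Nf_le _ _ _)
    · rw [if_neg hker]
      rw [hS, stack_mulVec_eq_zero_iff C u k hk hm] at hker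
      push_neg at hker
      obtain ⟨j, hj, ℓ, hℓ, hne⟩ := hker
      refine le_of_eq (Finset.prod_eq_zero hj ?_)
      have hmatch : ¬ ∀ ℓ : Fin m, ℓ.1 < k j →
          (C j).mulVec (bvec m i) ℓ = (C j).mulVec (bvec m i') ℓ := by
        intro hall
        apply hne
        rw [Matrix.mulVec_add, Pi.add_apply, zmod2_add_eq_zero]
        exact hall ℓ hℓ
      have hkm : k j ≤ m := by have := hk j hj; omega
      have hkm1 : k j + 1 ≤ m := by have := hk j hj; omega
      have h1 : ¬ (⌊(2:ℝ)^(k j) * pt C i j⌋ = ⌊(2:ℝ)^(k j) * pt C i' j⌋) := by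
        rw [floor_pt_eq_iff C i i' j (k j) hkm]
        exact hmatch
      have h2 : ¬ (⌊(2:ℝ)^(k j + 1) * pt C i j⌋ = ⌊(2:ℝ)^(k j + 1) * pt C i' j⌋) := by
        rw [floor_pt_eq_iff C i i' j (k j + 1) hkm1]
        intro hall
        exact hmatch fun ℓ' hℓ' => hall ℓ' (by omega)
      simp [Nf, h1, h2]
  -- counting
  have count : ∀ i : ℕ, ∑ i' ∈ Finset.range (2^m),
      (if S.mulVec (bvec m i + bvec m i') = 0 then (1:ℚ) else 0) = (Kc : ℚ) := by
    intro i
    rw [sum_range_pow_eq_sum_univ (fun v => if S.mulVec (bvec m i + v) = 0 then (1:ℚ) else 0)]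
    calc ∑ v : Fin m → ZMod 2, (if S.mulVec (bvec m i + v) = 0 then (1:ℚ) else 0)
        = ∑ v : Fin m → ZMod 2, (if S.mulVec v = 0 then (1:ℚ) else 0) :=
          Fintype.sum_equiv (Equiv.addLeft (bvec m i)) _ _ (fun v => rfl)
      _ = ((Finset.univ.filter (fun v : Fin m → ZMod 2 => S.mulVec v = 0)).card : ℚ) := by
            rw [Finset.sum_boole]
      _ = (Kc : ℚ) := by
            norm_cast
            rw [hKc, ← Fintype.card_subtype, Nat.card_eq_fintype_card]
            exact (Fintype.card_congr (Equiv.subtypeEquivRight (fun v => by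
              simp [LinearMap.mem_ker, Matrix.mulVecLin_apply]))).symm
  -- assemble
  have sum_bound : ∑ i ∈ Finset.range (2^m), ∑ i' ∈ Finset.range (2^m),
      ∏ j ∈ u, (Nf (pt C i j) (pt C i' j) (k j) : ℚ) ≤ (2^m : ℚ) * Kc := by
    calc ∑ i ∈ Finset.range (2^m), ∑ i' ∈ Finset.range (2^m),
        ∏ j ∈ u, (Nf (pt C i j) (pt C i' j) (k j) : ℚ)
        ≤ ∑ i ∈ Finset.range (2^m), ∑ i' ∈ Finset.range (2^m),
            (if S.mulVec (bvec m i + bvec m i') = 0 then (1:ℚ) else 0) :=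
          Finset.sum_le_sum fun i hi => Finset.sum_le_sum (key i hi)
      _ = ∑ i ∈ Finset.range (2^m), (Kc : ℚ) := Finset.sum_congr rfl fun i _ => count i
      _ = (2^m : ℚ) * Kc := by rw [Finset.sum_const, Finset.card_range]; push_cast; ring
  have hpos : (0:ℚ) < 2^m := by positivity
  calc Gam C u k ≤ (2^m : ℚ)⁻¹ * ((2^m : ℚ) * Kc) := by
        rw [Gam]
        exact mul_le_mul_of_nonneg_left sum_bound (by positivity)
    _ = (Kc : ℚ) := by field_simp
    _ = (2:ℚ) ^ (m - S.rank) := by rw [hker_card]; push_cast; ring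



end
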